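/- Let n be a positive integer that is an odd square, divisible by 5, with σ(n)/n = 9/5. If q₄ is the fourth smallest prime divisor of n, then q₄ < p_{⌈390ω(n)/47⌉}, where p_k is the k-th prime. -/

import Mathlib

/-!
Since `σ(n)/n` is multiplicative and `σ(p^k)/p^k < p/(p-1)`, we get
`9/5 < ∏_{p ∣ n} p/(p-1)`. A short case analysis on the power of `3` in the square `n` shows
`3 ∤ n`, so the three smallest prime factors are at least `5, 7, 11` and contribute at most
`77/48`. If `q₄ ≥ p_K` with `K = ⌈390 ω(n)/47⌉`, the remaining `ω(n) - 3` prime factors all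
exceed `K`, and their product telescopes to at most `1 + (ω(n) - 3)/K < 1 + 47/390`.
But `77/48 · (1 + 47/390) < 9/5`.
-/

open ArithmeticFunction Finset
open scoped ArithmeticFunction.sigma

theorem div_sub_one_le_div_sub_one {K : Type*} [Field K] [LinearOrder K] [IsStrictOrderedRing K]
    {a b : K} (ha : 1 < a) (hab : a ≤ b) : b / (b - 1) ≤ a / (a - 1) := by
  rw [div_le_div_iff₀ (by linarith) (by linarith)]
  linarith

namespace Nat

theorem div_sub_one_nonneg (p : ℕ) : 0 ≤ (p : ℚ) / (p - 1) := by
  rcases p with _ | p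
  · simp
  · rw [cast_succ, add_sub_cancel_right]
    positivity

theorem abundancyIndex_eq_sigma_one_div (n : ℕ) : n.abundancyIndex = (σ 1 n : ℚ) / n := by
  simp [abundancyIndex, sigma_one_apply]

theorem one_lt_of_one_lt_abundancyIndex {n : ℕ} (h : 1 < n.abundancyIndex) : 1 < n := by
  by_contra! hn
  interval_cases n <;> norm_num [abundancyIndex] at h

theorem mul_sigma_one_eq_of_abundancyIndex_eq {n a b : ℕ} (hb : b ≠ 0)
    (h : n.abundancyIndex = a / b) : b * σ 1 n = a * n := by
  rcases eq_or_ne n 0 with rfl | hn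
  · simp
  rw [abundancyIndex_eq_sigma_one_div, div_eq_div_iff (by exact_mod_cast hn)
    (by exact_mod_cast hb)] at h
  exact_mod_cast (by linarith : (b * σ 1 n : ℚ) = a * n)

theorem abundancyIndex_mul {m n : ℕ} (h : m.Coprime n) :
    (m * n).abundancyIndex = m.abundancyIndex * n.abundancyIndex := by
  simp only [abundancyIndex_eq_sigma_one_div, isMultiplicative_sigma.map_mul_of_coprime h]
  push_cast
  rw [mul_div_mul_comm]

theorem abundancyIndex_eq_prod_primeFactors {n : ℕ} (hn : n ≠ 0) :
    n.abundancyIndex = ∏ p ∈ n.primeFactors, (p ^ n.factorization p).abundancyIndex :=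
  multiplicative_factorization _ (fun _ _ => abundancyIndex_mul) (by simp [abundancyIndex]) hn

theorem abundancyIndex_prime_pow {p : ℕ} (hp : p.Prime) (k : ℕ) :
    (p ^ k).abundancyIndex = (∑ i ∈ range (k + 1), (p : ℚ) ^ i) / p ^ k := by
  rw [abundancyIndex_eq_sigma_one_div, sigma_one_apply_prime_pow hp]
  push_cast
  rfl

theorem abundancyIndex_prime_pow_lt {p : ℕ} (hp : p.Prime) (k : ℕ) :
    (p ^ k).abundancyIndex < p / (p - 1) := by
  have hp1 : (1 : ℚ) < p := by exact_mod_cast hp.one_lt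
  rw [abundancyIndex_prime_pow hp, div_lt_div_iff₀ (by positivity) (by linarith),
    geom_sum_mul, _root_.pow_succ']
  linarith

theorem abundancyIndex_pos {n : ℕ} (hn : n ≠ 0) : 0 < n.abundancyIndex := by
  rw [abundancyIndex_eq_sigma_one_div]
  have : 0 < σ 1 n := sigma_pos 1 n hn
  positivity

theorem abundancyIndex_lt_prod_primeFactors {n : ℕ} (hn : 1 < n) :
    n.abundancyIndex < ∏ p ∈ n.primeFactors, (p : ℚ) / (p - 1) := by
  rw [abundancyIndex_eq_prod_primeFactors (by omega)]
  refine prod_lt_prod_of_nonempty (fun p hp => abundancyIndex_pos ?_)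
    (fun p hp => abundancyIndex_prime_pow_lt (prime_of_mem_primeFactors hp) _)
    (nonempty_primeFactors.2 hn)
  exact pow_ne_zero _ (prime_of_mem_primeFactors hp).ne_zero

theorem pow_two_mul_add_two_dvd_of_isSquare {n p k : ℕ} (hsq : IsSquare n) (hp : p.Prime)
    (h : p ^ (2 * k + 1) ∣ n) : p ^ (2 * k + 2) ∣ n := by
  obtain ⟨m, rfl⟩ := hsq
  rcases eq_or_ne m 0 with rfl | hm
  · simp
  rw [hp.pow_dvd_iff_le_factorization (mul_ne_zero hm hm)] at h ⊢
  rw [factorization_mul hm hm, Finsupp.add_apply] at h ⊢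
  omega

/-- If `3 ∣ n`, then either `3⁴ ∣ n`, or `3² ∥ n` and `σ(3²) = 13` forces `13² ∣ n`; in both
cases `n` has a divisor of abundancy index larger than `9 / 5`. -/
theorem not_three_dvd_of_abundancyIndex_eq {n : ℕ} (hsq : IsSquare n) (h5 : 5 ∣ n)
    (h : n.abundancyIndex = 9 / 5) : ¬ 3 ∣ n := by
  intro h3
  have hn : n ≠ 0 := by rintro rfl; norm_num [abundancyIndex] at h
  have h25 : 5 ^ 2 ∣ n :=
    pow_two_mul_add_two_dvd_of_isSquare (k := 0) hsq prime_five (by simpa using h5)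
  have h9 : 3 ^ 2 ∣ n :=
    pow_two_mul_add_two_dvd_of_isSquare (k := 0) hsq prime_three (by simpa using h3)
  by_cases h27 : 3 ^ 3 ∣ n
  · have h81 : 3 ^ 4 ∣ n := pow_two_mul_add_two_dvd_of_isSquare (k := 1) hsq prime_three h27
    have hle := abundancyIndex_le_of_dvd hn (Coprime.mul_dvd_of_dvd_of_dvd (by norm_num) h81 h25)
    rw [h, abundancyIndex_mul (by norm_num), abundancyIndex_prime_pow prime_three,
      abundancyIndex_prime_pow prime_five] at hle
    norm_num [sum_range_succ] at hle
  · obtain ⟨m, rfl⟩ := h9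
    have hm : Coprime (3 ^ 2) m := by
      refine Coprime.pow_left 2 ((Prime.coprime_iff_not_dvd prime_three).2 fun h3m => h27 ?_)
      rw [pow_succ]
      exact mul_dvd_mul_left _ h3m
    have hσ := mul_sigma_one_eq_of_abundancyIndex_eq (a := 9) (b := 5) (by norm_num) h
    rw [isMultiplicative_sigma.map_mul_of_coprime hm, sigma_one_apply_prime_pow prime_three] at hσ
    norm_num [sum_range_succ] at hσ
    have h13 : 13 ∣ m := (Coprime.dvd_mul_left (by norm_num : Coprime 13 81)).1
      ⟨5 * σ 1 m, by linarith⟩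
    have h169 : 13 ^ 2 ∣ 3 ^ 2 * m := pow_two_mul_add_two_dvd_of_isSquare (k := 0) hsq
      (by norm_num) (by simpa using h13.mul_left _)
    have hd : 3 ^ 2 * 5 ^ 2 * 13 ^ 2 ∣ 3 ^ 2 * m :=
      Coprime.mul_dvd_of_dvd_of_dvd (by norm_num)
        (Coprime.mul_dvd_of_dvd_of_dvd (by norm_num) (dvd_mul_right _ _) h25) h169
    have hle := abundancyIndex_le_of_dvd hn hd
    rw [h, abundancyIndex_mul (by norm_num), abundancyIndex_mul (by norm_num),
      abundancyIndex_prime_pow prime_three, abundancyIndex_prime_pow prime_five,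
      abundancyIndex_prime_pow (by norm_num)] at hle
    norm_num [sum_range_succ] at hle

theorem five_le_of_mem_primeFactors {n p : ℕ} (hodd : Odd n) (h3 : ¬ 3 ∣ n)
    (hp : p ∈ n.primeFactors) : 5 ≤ p := by
  have hpn := dvd_of_mem_primeFactors hp
  have hp2 := (prime_of_mem_primeFactors hp).two_le
  have hp3 : p ≠ 3 := by rintro rfl; exact h3 hpn
  obtain ⟨k, rfl⟩ := hodd.of_dvd_nat hpn
  omega

end Nat

/-- The product telescopes against `∏_{i < #T} (K + i + 1) / (K + i) = 1 + #T / K`. -/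
theorem prod_div_sub_one_le_one_add_card_div (T : Finset ℕ) {K : ℕ} (hK : 0 < K)
    (hT : ∀ p ∈ T, K < p) : ∏ p ∈ T, (p : ℚ) / (p - 1) ≤ 1 + #T / K := by
  induction T using Finset.induction_on_min generalizing K with
  | empty => simp
  | insert a s has ih =>
    have has' : a ∉ s := fun h => lt_irrefl a (has a h)
    have hKa : (K : ℚ) + 1 ≤ a := by exact_mod_cast hT a (mem_insert_self a s)
    have hK' : (0 : ℚ) < K := by exact_mod_cast hK
    have ha1 : (a : ℚ) - 1 ≠ 0 := by linarith
    have ha0 : (a : ℚ) ≠ 0 := by linarith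
    have hs := ih (K := a) (by have := hT a (mem_insert_self a s); omega) has
    rw [prod_insert has', card_insert_of_notMem has']
    calc (a : ℚ) / (a - 1) * ∏ p ∈ s, (p : ℚ) / (p - 1)
        ≤ a / (a - 1) * (1 + #s / a) := by gcongr; exact Nat.div_sub_one_nonneg a
      _ = 1 + (#s + 1) / (a - 1) := by field_simp; ring
      _ ≤ 1 + (#s + 1) / K := by gcongr; linarith
      _ = 1 + ((#s + 1 : ℕ) : ℚ) / K := by push_cast; ring

theorem prod_div_sub_one_le_of_card_eq_three {S : Finset ℕ} (hS : #S = 3)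
    (h : ∀ p ∈ S, p.Prime ∧ 5 ≤ p) : ∏ p ∈ S, (p : ℚ) / (p - 1) ≤ 77 / 48 := by
  set e := S.orderEmbOfFin hS
  have he i : (e i).Prime ∧ 5 ≤ e i := h _ (S.orderEmbOfFin_mem hS i)
  have h0 : 5 ≤ e 0 := (he 0).2
  have h1 : 7 ≤ e 1 := by
    have := h0.trans_lt (e.strictMono (show (0 : Fin 3) < 1 by decide))
    have hp := (he 1).1
    by_contra
    interval_cases e 1
    norm_num at hp
  have h2 : 11 ≤ e 2 := by
    have := h1.trans_lt (e.strictMono (show (1 : Fin 3) < 2 by decide))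
    have hp := (he 2).1
    by_contra
    interval_cases e 2 <;> norm_num at hp
  have hbound i : ![5, 7, 11] i ≤ e i := by fin_cases i <;> simpa
  calc ∏ p ∈ S, (p : ℚ) / (p - 1)
      = ∏ i, (e i : ℚ) / (e i - 1) := by
        rw [← S.image_orderEmbOfFin_univ hS, prod_image e.injective.injOn]
    _ ≤ ∏ i, ((![5, 7, 11] i : ℕ) : ℚ) / (((![5, 7, 11] i : ℕ) : ℚ) - 1) :=
        prod_le_prod (fun i _ => Nat.div_sub_one_nonneg _) fun i _ =>
          div_sub_one_le_div_sub_one (by fin_cases i <;> norm_num) (by exact_mod_cast hbound i)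
    _ = 77 / 48 := by simp [Fin.prod_univ_three]; norm_num

theorem fourth_prime_bound_general (n : ℕ) (hodd : Odd n) (hsq : IsSquare n)
    (h5 : 5 ∣ n) (habund : (σ 1 n : ℚ) / n = 9 / 5) (q₄ : ℕ)
    (hfourth : (n.primeFactors.filter (· < q₄)).card = 3) :
    q₄ < Nat.nth Nat.Prime ((⌈(390 * (n.primeFactors.card : ℚ)) / 47⌉).toNat - 1) := by
  rw [← Nat.abundancyIndex_eq_sigma_one_div] at habund
  rw [Int.ceil_toNat]
  set ω := n.primeFactors.card
  set K := ⌈(390 * (ω : ℚ)) / 47⌉₊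
  by_contra! hq
  have h3 := Nat.not_three_dvd_of_abundancyIndex_eq hsq h5 habund
  have hω : 3 ≤ ω := hfourth ▸ card_filter_le _ _
  have hK : 390 * (ω : ℚ) / 47 ≤ K := Nat.le_ceil _
  have hKpos : 0 < K := Nat.ceil_pos.2 (by positivity)
  have hsmall := prod_div_sub_one_le_of_card_eq_three hfourth fun p hp =>
    have hp := mem_of_mem_filter p hp
    ⟨Nat.prime_of_mem_primeFactors hp, Nat.five_le_of_mem_primeFactors hodd h3 hp⟩
  have htail : ∏ p ∈ n.primeFactors.filter (¬ · < q₄), (p : ℚ) / (p - 1) ≤ 1 + (ω - 3) / K := by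
    have hcard : ((n.primeFactors.filter (¬ · < q₄)).card : ℚ) = ω - 3 := by
      rw [eq_sub_iff_add_eq, add_comm]
      exact_mod_cast hfourth ▸ card_filter_add_card_filter_not (s := n.primeFactors) (· < q₄)
    rw [← hcard]
    refine prod_div_sub_one_le_one_add_card_div _ hKpos fun p hp => ?_
    have := Nat.add_two_le_nth_prime (K - 1)
    have := (mem_filter.1 hp).2
    omega
  have hlt := Nat.abundancyIndex_lt_prod_primeFactors
    (Nat.one_lt_of_one_lt_abundancyIndex (n := n) (by norm_num [habund]))
  rw [habund, ← prod_filter_mul_prod_filter_not _ (· < q₄)] at hlt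
  replace hlt := hlt.trans_le (mul_le_mul hsmall htail
    (prod_nonneg fun p _ => Nat.div_sub_one_nonneg p) (by norm_num))
  have hratio : (ω - 3) / (K : ℚ) < 47 / 390 := by
    rw [div_lt_iff₀ (by exact_mod_cast hKpos)]
    linarith
  linarith

theorem fourth_prime_bound (n : ℕ) (hn : 0 < n) (hodd : Odd n) (hsq : IsSquare n)
    (h5 : 5 ∣ n) (habund : (σ 1 n : ℚ) / n = 9 / 5) (q₄ : ℕ)
    (hq₄ : q₄ ∈ n.primeFactors) (hfourth : (n.primeFactors.filter (· < q₄)).card = 3) :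
    q₄ < Nat.nth Nat.Prime ((⌈(390 * (n.primeFactors.card : ℚ)) / 47⌉).toNat - 1) :=
  fourth_prime_bound_general n hodd hsq h5 habund q₄ hfourth
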